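/- Assume Cov[w|ξ] ⪯ σ₀² I for all ξ, let λ_max be the largest eigenvalue of XᵀX, and suppose σ₀² ≤ 1/(α c ‖r‖_∞ λ_max). Then for every unit vector a ∈ ℝⁿ, aᵀ Cov[(αc|R|)^{1/2} X w | ξ] a ≤ 1, and hence ∇² log p(ξ) ⪯ 0, i.e., p(ξ) is log-concave. -/

import Mathlib

open MeasureTheory

lemma aux_abs_exp (z : ℝ) : |z| * Real.exp (-(z^2)/2) ≤ 1 := by
  have h1 : |z| ≤ Real.exp (z^2/2) := by
    nlinarith [Real.add_one_le_exp (z^2/2), sq_abs z, sq_nonneg (|z|-1), abs_nonneg z]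
  calc |z| * Real.exp (-(z^2)/2) ≤ Real.exp (z^2/2) * Real.exp (-(z^2)/2) :=
        mul_le_mul_of_nonneg_right h1 (Real.exp_nonneg _)
    _ = 1 := by rw [← Real.exp_add, show z ^ 2 / 2 + -z ^ 2 / 2 = (0:ℝ) from by ring, Real.exp_zero]

lemma aux_sq_exp (u : ℝ) (hu : 0 ≤ u) : u * Real.exp (-u/2) ≤ 2 := by
  have h1 : u ≤ 2 * Real.exp (u/2) := by
    nlinarith [Real.add_one_le_exp (u/2), Real.exp_nonneg (u/2)]
  calc u * Real.exp (-u/2) ≤ (2 * Real.exp (u/2)) * Real.exp (-u/2) :=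
        mul_le_mul_of_nonneg_right h1 (Real.exp_nonneg _)
    _ = 2 := by rw [mul_assoc, ← Real.exp_add, show u / 2 + -u / 2 = (0:ℝ) from by ring, Real.exp_zero, mul_one]

lemma aux_taylor_upper (f : ℝ → ℝ) (c : ℝ) (hd : Differentiable ℝ f)
    (h : ∀ x : ℝ, |deriv f x - deriv f 0| ≤ c * |x|) :
    ∀ u : ℝ, f u ≤ f 0 + deriv f 0 * u + c/2 * u^2 := by
  intro u
  set g : ℝ → ℝ := fun x => c/2*x^2 + (f 0 + deriv f 0 * x) - f x with hgdef
  have hg : ∀ x, HasDerivAt g (c * x + deriv f 0 - deriv f x) x := by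
    intro x
    have h1 : HasDerivAt (fun x : ℝ => c/2*x^2 + (f 0 + deriv f 0 * x))
        (c/2*(2*x^1) + deriv f 0 * 1) x := by
      exact (((hasDerivAt_pow 2 x).const_mul (c/2)).add
        (((hasDerivAt_id x).const_mul (deriv f 0)).const_add (f 0)))
    have := h1.sub (hd x).hasDerivAt
    exact this.congr_deriv (by ring)
  have hgc : Continuous g := by
    have : Differentiable ℝ g := fun x => (hg x).differentiableAt
    exact this.continuous
  have hg0 : g 0 = 0 := by simp [hgdef]
  have key : 0 ≤ g u := by
    rcases le_total 0 u with hu | hu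
    · have hmono : MonotoneOn g (Set.Ici (0:ℝ)) := by
        refine monotoneOn_of_deriv_nonneg (convex_Ici 0) hgc.continuousOn
          (fun x _ => (hg x).differentiableAt.differentiableWithinAt) ?_
        intro x hx
        rw [interior_Ici] at hx
        rw [(hg x).deriv]
        have := h x
        rw [abs_of_pos (show (0:ℝ) < x from hx)] at this
        have h2 : deriv f x - deriv f 0 ≤ c * x := (abs_le.mp this).2
        linarith
      have := hmono (Set.self_mem_Ici) (Set.mem_Ici.mpr hu) hu
      linarith [hg0 ▸ this]
    · have hanti : AntitoneOn g (Set.Iic (0:ℝ)) := by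
        refine antitoneOn_of_deriv_nonpos (convex_Iic 0) hgc.continuousOn
          (fun x _ => (hg x).differentiableAt.differentiableWithinAt) ?_
        intro x hx
        rw [interior_Iic] at hx
        rw [(hg x).deriv]
        have := h x
        rw [abs_of_neg (show x < (0:ℝ) from hx)] at this
        have h2 : -(c * -x) ≤ deriv f x - deriv f 0 := by
          have := (abs_le.mp this).1; linarith
        linarith
      have := hanti (Set.mem_Iic.mpr hu) (Set.self_mem_Iic) hu
      linarith [hg0 ▸ this]
  simp only [hgdef] at key
  linarith

lemma aux_taylor_abs (ψ : ℝ → ℝ) (c : ℝ) (hψ : ContDiff ℝ 2 ψ)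
    (hb : ∀ u : ℝ, |deriv (deriv ψ) u| ≤ c) :
    ∀ u : ℝ, |ψ u| ≤ |ψ 0| + |deriv ψ 0| * |u| + c/2 * u^2 := by
  have hd : Differentiable ℝ ψ := hψ.differentiable (by norm_num)
  have h2 : ContDiff ℝ (1+1) ψ := by rw [one_add_one_eq_two]; exact hψ
  have hd' : Differentiable ℝ (deriv ψ) :=
    ((contDiff_succ_iff_deriv.mp h2).2.2).differentiable (by norm_num)
  have hφ : ∀ x : ℝ, |deriv ψ x - deriv ψ 0| ≤ c * |x| := by
    intro x
    have := Convex.norm_image_sub_le_of_norm_deriv_le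
      (f := deriv ψ) (C := c) (fun y _ => hd' y)
      (fun y _ => by simpa using hb y) convex_univ (Set.mem_univ 0) (Set.mem_univ x)
    simpa [Real.norm_eq_abs] using this
  intro u
  have h1 := aux_taylor_upper ψ c hd hφ u
  have h2' : ∀ x : ℝ, |deriv (fun y => -ψ y) x - deriv (fun y => -ψ y) 0| ≤ c * |x| := by
    intro x
    have e : ∀ y : ℝ, deriv (fun y => -ψ y) y = -deriv ψ y := fun y => deriv.neg
    rw [e, e, show -deriv ψ x - -deriv ψ 0 = -(deriv ψ x - deriv ψ 0) from by ring, abs_neg]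
    exact hφ x
  have h2 := aux_taylor_upper (fun y => -ψ y) c hd.neg h2' u
  have e : ∀ y : ℝ, deriv (fun y => -ψ y) y = -deriv ψ y := fun y => deriv.neg
  rw [e] at h2
  rw [abs_le]
  constructor <;>
    nlinarith [le_abs_self (ψ 0), neg_abs_le (ψ 0), le_abs_self (deriv ψ 0 * u),
      neg_abs_le (deriv ψ 0 * u), abs_mul (deriv ψ 0) u, abs_nonneg (deriv ψ 0),
      abs_nonneg u, sq_abs u]

lemma aux_int1d (K : ℝ) {a : ℝ} (ha : 0 < a) :
    Integrable (fun t : ℝ => (1 + t^2) * Real.exp (K * |t| - a * t^2)) := by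
  set δ : ℝ := min (a/4) 1 with hδdef
  have hδpos : 0 < δ := lt_min (by linarith) one_pos
  have hδ1 : δ ≤ 1 := min_le_right _ _
  have hδa : δ ≤ a/4 := min_le_left _ _
  set M : ℝ := (1/δ) * Real.exp (K^2/a) with hM
  have hbd : ∀ t : ℝ, (1 + t^2) * Real.exp (K * |t| - a * t^2) ≤ M * Real.exp (-(a/2) * t^2) := by
    intro t
    have h1 : 1 + t^2 ≤ (1/δ) * Real.exp ((a/4) * t^2) := by
      have e1 : Real.exp (δ * t^2) ≥ 1 + δ * t^2 := by
        have := Real.add_one_le_exp (δ * t^2); linarith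
      have e2 : Real.exp (δ * t^2) ≤ Real.exp ((a/4) * t^2) := by
        apply Real.exp_le_exp.mpr; nlinarith [sq_nonneg t]
      have e3 : δ * (1 + t^2) ≤ 1 + δ * t^2 := by nlinarith
      calc 1 + t^2 = (1/δ) * (δ * (1 + t^2)) := by field_simp
        _ ≤ (1/δ) * Real.exp ((a/4) * t^2) := by
            apply mul_le_mul_of_nonneg_left _ (by positivity)
            calc δ * (1 + t^2) ≤ 1 + δ * t^2 := e3
              _ ≤ Real.exp (δ * t^2) := e1
              _ ≤ Real.exp ((a/4) * t^2) := e2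
    have h2 : K * |t| - a * t^2 ≤ K^2/a + (a/4) * t^2 - a * t^2 := by
      have key : 4*a*(K*|t|) ≤ 4*K^2 + a^2*t^2 := by nlinarith [sq_nonneg (a*|t| - 2*K), sq_abs t]
      have e4 : K^2/a*a = K^2 := div_mul_cancel₀ _ ha.ne'
      nlinarith [key, e4, ha, sq_nonneg t]
    calc (1 + t^2) * Real.exp (K * |t| - a * t^2)
        ≤ ((1/δ) * Real.exp ((a/4) * t^2)) * Real.exp (K^2/a + (a/4) * t^2 - a * t^2) := by
          apply mul_le_mul h1 (Real.exp_le_exp.mpr h2) (Real.exp_nonneg _) (by positivity)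
      _ = M * Real.exp (-(a/2) * t^2) := by
          rw [hM, mul_assoc, mul_assoc, ← Real.exp_add, ← Real.exp_add]
          congr 2
          ring
  have hint : Integrable (fun t : ℝ => M * Real.exp (-(a/2) * t^2)) :=
    (integrable_exp_neg_mul_sq (by linarith)).const_mul M
  refine hint.mono' ?_ ?_
  · apply Continuous.aestronglyMeasurable
    exact (continuous_const.add (continuous_pow 2)).mul
      (Real.continuous_exp.comp ((continuous_const.mul continuous_abs).sub
        (continuous_const.mul (continuous_pow 2))))
  · refine Filter.Eventually.of_forall (fun t => ?_)
    rw [Real.norm_eq_abs, abs_of_nonneg (by positivity)]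
    exact hbd t

lemma aux_one_le_prod {ι : Type*} (s : Finset ι) (f : ι → ℝ) (h : ∀ i ∈ s, 1 ≤ f i) :
    1 ≤ ∏ i ∈ s, f i :=
  calc (1:ℝ) = ∏ _i ∈ s, 1 := Finset.prod_const_one.symm
    _ ≤ ∏ i ∈ s, f i := Finset.prod_le_prod (fun _ _ => zero_le_one) h

lemma aux_single_le_prod {ι : Type*} [Fintype ι] [DecidableEq ι] (f : ι → ℝ)
    (h : ∀ i, 1 ≤ f i) (j : ι) : f j ≤ ∏ i, f i := by
  rw [← Finset.mul_prod_erase Finset.univ f (Finset.mem_univ j)]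
  have h1 : 1 ≤ ∏ i ∈ Finset.univ.erase j, f i := aux_one_le_prod _ _ (fun i _ => h i)
  exact le_mul_of_one_le_right (by linarith [h j]) h1

lemma aux_pair_le_prod {ι : Type*} [Fintype ι] [DecidableEq ι] (f : ι → ℝ)
    (h : ∀ i, 1 ≤ f i) {j k : ι} (hjk : j ≠ k) : f j * f k ≤ ∏ i, f i := by
  rw [← Finset.mul_prod_erase Finset.univ f (Finset.mem_univ j),
    ← Finset.mul_prod_erase _ f (Finset.mem_erase.mpr ⟨Ne.symm hjk, Finset.mem_univ k⟩)]
  have h1 : 1 ≤ ∏ i ∈ (Finset.univ.erase j).erase k, f i := aux_one_le_prod _ _ (fun i _ => h i)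
  have hfj : (0:ℝ) ≤ f j := by linarith [h j]
  have hfk : (0:ℝ) ≤ f k := by linarith [h k]
  calc f j * f k = f j * (f k * 1) := by ring
    _ ≤ f j * (f k * ∏ i ∈ (Finset.univ.erase j).erase k, f i) :=
        mul_le_mul_of_nonneg_left (mul_le_mul_of_nonneg_left h1 hfk) hfj

lemma aux_swap3 {A B : Type*} [Fintype A] [Fintype B] (f : A → A → B → ℝ) :
    ∑ j : A, ∑ k : A, ∑ i : B, f j k i = ∑ i : B, ∑ j : A, ∑ k : A, f j k i :=
  calc ∑ j : A, ∑ k : A, ∑ i : B, f j k i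
      = ∑ j : A, ∑ i : B, ∑ k : A, f j k i :=
        Finset.sum_congr rfl fun j _ => Finset.sum_comm
    _ = ∑ i : B, ∑ j : A, ∑ k : A, f j k i := Finset.sum_comm

lemma aux_swap4 {A B : Type*} [Fintype A] [Fintype B] (f : A → A → B → B → ℝ) :
    ∑ i : A, ∑ i' : A, ∑ j : B, ∑ k : B, f i i' j k
      = ∑ j : B, ∑ k : B, ∑ i : A, ∑ i' : A, f i i' j k :=
  calc ∑ i : A, ∑ i' : A, ∑ j : B, ∑ k : B, f i i' j k
      = ∑ i : A, ∑ j : B, ∑ i' : A, ∑ k : B, f i i' j k :=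
        Finset.sum_congr rfl fun i _ => Finset.sum_comm
    _ = ∑ j : B, ∑ i : A, ∑ i' : A, ∑ k : B, f i i' j k := Finset.sum_comm
    _ = ∑ j : B, ∑ i : A, ∑ k : B, ∑ i' : A, f i i' j k :=
        Finset.sum_congr rfl fun j _ => Finset.sum_congr rfl fun i _ => Finset.sum_comm
    _ = ∑ j : B, ∑ k : B, ∑ i : A, ∑ i' : A, f i i' j k :=
        Finset.sum_congr rfl fun j _ => Finset.sum_comm

set_option maxHeartbeats 1000000 in
/-- Gaussian prior case. Assume `Cov[w|ξ] ⪯ σ₀² I` for all `ξ`, let `λ_max` be the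
largest eigenvalue of `XᵀX` and suppose `σ₀² ≤ 1/(α c ‖r‖_∞ λ_max)`. Then for every unit vector
`a ∈ ℝⁿ`, `aᵀ Cov[(αc|R|)^{1/2} X w | ξ] a ≤ 1`, and hence `p(ξ)` is log-concave. -/
theorem stmt_7 {d n : ℕ} (ψ : ℝ → ℝ) (c α σ₀ lamMax rmax : ℝ)
    (hα : 0 < α) (hc : 0 < c) (hσ : 0 < σ₀)
    (hψ : ContDiff ℝ 2 ψ) (hψ'' : ∀ u : ℝ, |deriv (deriv ψ) u| ≤ c)
    (x : Fin n → Fin d → ℝ) (r : Fin n → ℝ)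
    -- λ_max is the largest eigenvalue of XᵀX (sup of its quadratic form over unit vectors)
    (hLamMax : IsGreatest {t : ℝ | ∃ v : Fin d → ℝ, (∑ j, (v j) ^ 2) = 1 ∧
        t = ∑ j, ∑ k, v j * (∑ i, x i j * x i k) * v k} lamMax)
    -- rmax = ‖r‖_∞
    (hrmax : IsGreatest (Set.range fun i : Fin n => |r i|) rmax)
    -- Gaussian prior N(0, σ₀² I), posterior p(w), joint density of the coupling, marginal p(ξ)
    (p₀ : (Fin d → ℝ) → ℝ)
    (hp₀ : ∀ w, p₀ w = (2 * Real.pi * σ₀ ^ 2) ^ (-(d : ℝ) / 2) *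
        Real.exp (-(∑ j, (w j) ^ 2) / (2 * σ₀ ^ 2)))
    (Z : ℝ)
    (hZ : Z = ∫ w : Fin d → ℝ, Real.exp (α * ∑ i, r i * ψ (∑ j, x i j * w j)) * p₀ w)
    (hZpos : 0 < Z)
    (p : (Fin d → ℝ) → ℝ)
    (hp : ∀ w, p w = Real.exp (α * ∑ i, r i * ψ (∑ j, x i j * w j)) * p₀ w / Z)
    (joint : (Fin d → ℝ) → (Fin n → ℝ) → ℝ)
    (hjoint : ∀ w ξ, joint w ξ = p w *
      ((2 * Real.pi) ^ (-(n : ℝ) / 2) *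
        Real.exp (-(∑ i, (ξ i - Real.sqrt (α * c * |r i|) * (∑ j, x i j * w j)) ^ 2) / 2)))
    (pξ : (Fin n → ℝ) → ℝ) (hpξ : ∀ ξ, pξ ξ = ∫ w : Fin d → ℝ, joint w ξ)
    (hpξpos : ∀ ξ, 0 < pξ ξ)
    -- conditional covariance matrix Cov[w|ξ] under the reverse conditional p(w|ξ)
    (CovW : (Fin n → ℝ) → Matrix (Fin d) (Fin d) ℝ)
    (hCovW : ∀ ξ j k, CovW ξ j k
      = (∫ w : Fin d → ℝ, w j * w k * joint w ξ) / pξ ξ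
        - ((∫ w : Fin d → ℝ, w j * joint w ξ) / pξ ξ)
          * ((∫ w : Fin d → ℝ, w k * joint w ξ) / pξ ξ))
    -- assumption: Cov[w|ξ] ⪯ σ₀² I for all ξ
    (hdom : ∀ ξ, (σ₀ ^ 2 • (1 : Matrix (Fin d) (Fin d) ℝ) - CovW ξ).PosSemidef)
    -- assumption: σ₀² ≤ 1/(α c ‖r‖_∞ λ_max)
    (hσ₀ : σ₀ ^ 2 ≤ 1 / (α * c * rmax * lamMax)) :
    -- conclusion: aᵀ Cov[(αc|R|)^{1/2} X w | ξ] a ≤ 1 for unit a, and p(ξ) is log-concave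
    (∀ (ξ : Fin n → ℝ) (a : Fin n → ℝ), (∑ i, (a i) ^ 2) = 1 →
      (∑ i, ∑ i', a i * a i' * (Real.sqrt (α * c * |r i|) * Real.sqrt (α * c * |r i'|) *
        (∑ j, ∑ k, x i j * CovW ξ j k * x i' k))) ≤ 1) ∧
    ConcaveOn ℝ Set.univ (fun ξ : Fin n → ℝ => Real.log (pξ ξ)) := by
  -- abbreviation for the sqrt weights
  set s : Fin n → ℝ := fun i => Real.sqrt (α * c * |r i|) with hs_def
  have hs_nn : ∀ i, 0 ≤ s i := fun i => Real.sqrt_nonneg _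
  have hs_sq : ∀ i, s i ^ 2 = α * c * |r i| := fun i => Real.sq_sqrt (by positivity)
  -- rmax is nonnegative and bounds |r i|
  have hrmax0 : 0 ≤ rmax := by
    obtain ⟨i, hi⟩ := hrmax.1
    rw [← hi]; exact abs_nonneg _
  have hr_le : ∀ i, |r i| ≤ rmax := fun i => hrmax.2 ⟨i, rfl⟩
  -- quadratic form identity
  have qid : ∀ v : Fin d → ℝ, (∑ j, ∑ k, v j * (∑ i, x i j * x i k) * v k)
      = ∑ i, (∑ j, x i j * v j) ^ 2 := by
    intro v
    have e1 : ∀ j k : Fin d, v j * (∑ i, x i j * x i k) * v k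
        = ∑ i, v j * x i j * (x i k * v k) := by
      intro j k
      rw [Finset.mul_sum, Finset.sum_mul]
      exact Finset.sum_congr rfl fun i _ => by ring
    simp_rw [e1]
    rw [aux_swap3]
    refine Finset.sum_congr rfl fun i _ => ?_
    rw [pow_two, Finset.sum_mul_sum]
    exact Finset.sum_congr rfl fun j _ => Finset.sum_congr rfl fun k _ => by ring
  have hlam0 : 0 ≤ lamMax := by
    obtain ⟨v, hunit, hval⟩ := hLamMax.1
    rw [hval, qid]
    exact Finset.sum_nonneg fun i _ => sq_nonneg _
  -- lamMax bounds the quadratic form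
  have hlam_ub : ∀ v : Fin d → ℝ, (∑ i, (∑ j, x i j * v j) ^ 2) ≤ lamMax * ∑ j, (v j) ^ 2 := by
    intro v
    rcases eq_or_lt_of_le (show (0:ℝ) ≤ ∑ j, (v j)^2 from Finset.sum_nonneg fun j _ => sq_nonneg _)
      with hN | hN
    · have hv0 : ∀ j, v j = 0 := by
        intro j
        have := Finset.sum_eq_zero_iff_of_nonneg (fun j (_ : j ∈ Finset.univ) => sq_nonneg (v j))
        rw [← hN] at this
        have := (this.mp rfl) j (Finset.mem_univ j)
        exact pow_eq_zero_iff (n := 2) (by norm_num) |>.mp this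
      have hz : ∀ i, (∑ j, x i j * v j) = 0 := fun i =>
        Finset.sum_eq_zero fun j _ => by rw [hv0 j, mul_zero]
      have hz2 : (∑ i, (∑ j, x i j * v j) ^ 2) = 0 :=
        Finset.sum_eq_zero fun i _ => by rw [hz i]; norm_num
      rw [hz2]
      exact mul_nonneg hlam0 (Finset.sum_nonneg fun j _ => sq_nonneg _)
    · set N := ∑ j, (v j)^2 with hNdef
      have hNpos : 0 < N := hN
      set v' : Fin d → ℝ := fun j => v j / Real.sqrt N with hv'
      have hsqrtN : Real.sqrt N ^ 2 = N := Real.sq_sqrt hNpos.le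
      have hsqrtNpos : 0 < Real.sqrt N := Real.sqrt_pos.mpr hNpos
      have hunit : (∑ j, (v' j)^2) = 1 := by
        simp_rw [hv', div_pow, ← Finset.sum_div, hsqrtN]
        exact div_self hNpos.ne'
      have hmem := hLamMax.2 ⟨v', hunit, rfl⟩
      rw [qid] at hmem
      have hper : ∀ i, (∑ j, x i j * v' j) = (∑ j, x i j * v j) / Real.sqrt N := by
        intro i
        rw [Finset.sum_div]
        refine Finset.sum_congr rfl fun j _ => ?_
        simp only [hv']
        ring
      have hscale : (∑ i, (∑ j, x i j * v' j)^2) = (∑ i, (∑ j, x i j * v j)^2) / N := by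
        simp_rw [hper, div_pow, hsqrtN, ← Finset.sum_div]
      rw [hscale, div_le_iff₀ hNpos] at hmem
      linarith [hmem]
  -- positivity of the product, and the key numeric inequality
  have hQpos : 0 < α * c * rmax * lamMax := by
    rcases eq_or_lt_of_le (show (0:ℝ) ≤ α * c * rmax * lamMax by positivity) with h0 | h0
    · rw [← h0] at hσ₀
      simp only [div_zero] at hσ₀
      nlinarith [hσ]
    · exact h0
  have hkey : σ₀ ^ 2 * (α * c * rmax * lamMax) ≤ 1 := by
    rw [le_div_iff₀ hQpos] at hσ₀
    linarith
  -- X^T b bound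
  have hXTb : ∀ b : Fin n → ℝ, (∑ j, (∑ i, b i * x i j) ^ 2) ≤ lamMax * ∑ i, (b i) ^ 2 := by
    intro b
    have hid : (∑ j, (∑ i, b i * x i j) ^ 2)
        = ∑ i, b i * (∑ j, x i j * (∑ i', b i' * x i' j)) := by
      calc ∑ j, (∑ i, b i * x i j) ^ 2
          = ∑ j, ∑ i, b i * (x i j * (∑ i', b i' * x i' j)) := by
            refine Finset.sum_congr rfl fun j _ => ?_
            rw [pow_two, Finset.sum_mul]
            exact Finset.sum_congr rfl fun i _ => by ring
        _ = ∑ i, ∑ j, b i * (x i j * (∑ i', b i' * x i' j)) := Finset.sum_comm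
        _ = ∑ i, b i * (∑ j, x i j * (∑ i', b i' * x i' j)) :=
            Finset.sum_congr rfl fun i _ => (Finset.mul_sum _ _ _).symm
    have hcs := Finset.sum_mul_sq_le_sq_mul_sq Finset.univ b
      (fun i => ∑ j, x i j * (∑ i', b i' * x i' j))
    rw [← hid] at hcs
    have hXu := hlam_ub (fun j => ∑ i', b i' * x i' j)
    have hNu0 : 0 ≤ ∑ j, (∑ i, b i * x i j) ^ 2 := Finset.sum_nonneg fun j _ => sq_nonneg _
    have hSb0 : 0 ≤ ∑ i, (b i) ^ 2 := Finset.sum_nonneg fun i _ => sq_nonneg _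
    rcases eq_or_lt_of_le hNu0 with h0 | h0
    · rw [← h0]; exact mul_nonneg hlam0 hSb0
    · nlinarith [hcs, hXu, h0, hSb0, hlam0]
  -- the main chain inequality
  have chain : ∀ (ξ : Fin n → ℝ) (b : Fin n → ℝ),
      (∑ j, ∑ k, (∑ i, b i * s i * x i j) * CovW ξ j k * (∑ i, b i * s i * x i k))
        ≤ ∑ i, (b i) ^ 2 := by
    intro ξ b
    set u : Fin d → ℝ := fun j => ∑ i, b i * s i * x i j with hu
    have hA := (hdom ξ).dotProduct_mulVec_nonneg u
    have hA' : 0 ≤ ∑ j, u j *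
        (∑ k, ((σ₀ ^ 2 • (1 : Matrix (Fin d) (Fin d) ℝ) - CovW ξ) j k) * u k) := by
      simpa [dotProduct, Matrix.mulVec] using hA
    have hexp : ∀ j, (∑ k, ((σ₀ ^ 2 • (1 : Matrix (Fin d) (Fin d) ℝ) - CovW ξ) j k) * u k)
        = σ₀ ^ 2 * u j - ∑ k, CovW ξ j k * u k := by
      intro j
      have : ∀ k, ((σ₀ ^ 2 • (1 : Matrix (Fin d) (Fin d) ℝ) - CovW ξ) j k) * u k
          = (σ₀ ^ 2 * (if j = k then (1:ℝ) else 0)) * u k - CovW ξ j k * u k := by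
        intro k
        simp [Matrix.sub_apply, Matrix.smul_apply, Matrix.one_apply, smul_eq_mul, sub_mul]
      simp_rw [this]
      rw [Finset.sum_sub_distrib]
      congr 1
      simp [Finset.sum_ite_eq, mul_ite]
    have hA'' : 0 ≤ σ₀ ^ 2 * (∑ j, (u j) ^ 2) - ∑ j, ∑ k, u j * CovW ξ j k * u k := by
      have e : ∀ j, u j * (σ₀ ^ 2 * u j - ∑ k, CovW ξ j k * u k)
          = σ₀ ^ 2 * (u j) ^ 2 - ∑ k, u j * CovW ξ j k * u k := by
        intro j
        calc u j * (σ₀ ^ 2 * u j - ∑ k, CovW ξ j k * u k)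
            = σ₀ ^ 2 * (u j) ^ 2 - u j * ∑ k, CovW ξ j k * u k := by ring
          _ = σ₀ ^ 2 * (u j) ^ 2 - ∑ k, u j * (CovW ξ j k * u k) := by rw [Finset.mul_sum]
          _ = σ₀ ^ 2 * (u j) ^ 2 - ∑ k, u j * CovW ξ j k * u k := by
              congr 1
              exact Finset.sum_congr rfl fun k _ => by ring
      simp_rw [hexp, e] at hA'
      rw [Finset.sum_sub_distrib, ← Finset.mul_sum] at hA'
      exact hA'
    have hB : (∑ j, (u j) ^ 2) ≤ lamMax * ∑ i, (b i * s i) ^ 2 := hXTb (fun i => b i * s i)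
    have hB2 : (∑ i, (b i * s i) ^ 2) ≤ (α * c * rmax) * ∑ i, (b i) ^ 2 := by
      rw [Finset.mul_sum]
      refine Finset.sum_le_sum fun i _ => ?_
      have : (b i * s i) ^ 2 = (α * c * |r i|) * (b i) ^ 2 := by
        rw [mul_pow, hs_sq]; ring
      rw [this]
      have h1 : α * c * |r i| ≤ α * c * rmax :=
        mul_le_mul_of_nonneg_left (hr_le i) (by positivity)
      exact mul_le_mul_of_nonneg_right h1 (sq_nonneg _)
    have hSb0 : 0 ≤ ∑ i, (b i) ^ 2 := Finset.sum_nonneg fun i _ => sq_nonneg _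
    have t1 : (∑ j, ∑ k, u j * CovW ξ j k * u k) ≤ σ₀ ^ 2 * (∑ j, (u j) ^ 2) := by linarith
    have t2 : σ₀ ^ 2 * (∑ j, (u j) ^ 2) ≤ σ₀ ^ 2 * (lamMax * ∑ i, (b i * s i) ^ 2) :=
      mul_le_mul_of_nonneg_left hB (sq_nonneg σ₀)
    have t3 : σ₀ ^ 2 * (lamMax * ∑ i, (b i * s i) ^ 2)
        ≤ σ₀ ^ 2 * (lamMax * ((α * c * rmax) * ∑ i, (b i) ^ 2)) := by
      apply mul_le_mul_of_nonneg_left _ (sq_nonneg σ₀)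
      exact mul_le_mul_of_nonneg_left hB2 hlam0
    have t4 : σ₀ ^ 2 * (lamMax * ((α * c * rmax) * ∑ i, (b i) ^ 2))
        = (σ₀ ^ 2 * (α * c * rmax * lamMax)) * ∑ i, (b i) ^ 2 := by ring
    have t5 : (σ₀ ^ 2 * (α * c * rmax * lamMax)) * (∑ i, (b i) ^ 2) ≤ 1 * ∑ i, (b i) ^ 2 :=
      mul_le_mul_of_nonneg_right hkey hSb0
    calc (∑ j, ∑ k, u j * CovW ξ j k * u k) ≤ σ₀ ^ 2 * (∑ j, (u j) ^ 2) := t1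
      _ ≤ σ₀ ^ 2 * (lamMax * ∑ i, (b i * s i) ^ 2) := t2
      _ ≤ σ₀ ^ 2 * (lamMax * ((α * c * rmax) * ∑ i, (b i) ^ 2)) := t3
      _ = (σ₀ ^ 2 * (α * c * rmax * lamMax)) * ∑ i, (b i) ^ 2 := t4
      _ ≤ 1 * ∑ i, (b i) ^ 2 := t5
      _ = ∑ i, (b i) ^ 2 := one_mul _
  constructor
  · -- Part 1
    intro ξ a ha
    have e : (∑ i, ∑ i', a i * a i' * (s i * s i' *
        (∑ j, ∑ k, x i j * CovW ξ j k * x i' k)))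
        = ∑ j, ∑ k, (∑ i, a i * s i * x i j) * CovW ξ j k * (∑ i', a i' * s i' * x i' k) := by
      calc (∑ i, ∑ i', a i * a i' * (s i * s i' * (∑ j, ∑ k, x i j * CovW ξ j k * x i' k)))
          = ∑ i, ∑ i', ∑ j, ∑ k,
              (a i * s i * x i j) * CovW ξ j k * (a i' * s i' * x i' k) := by
            refine Finset.sum_congr rfl fun i _ => Finset.sum_congr rfl fun i' _ => ?_
            rw [Finset.mul_sum, Finset.mul_sum]
            refine Finset.sum_congr rfl fun j _ => ?_
            rw [Finset.mul_sum, Finset.mul_sum]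
            exact Finset.sum_congr rfl fun k _ => by ring
        _ = ∑ j, ∑ k, ∑ i, ∑ i',
              (a i * s i * x i j) * CovW ξ j k * (a i' * s i' * x i' k) :=
            aux_swap4 _
        _ = ∑ j, ∑ k, (∑ i, a i * s i * x i j) * CovW ξ j k * (∑ i', a i' * s i' * x i' k) := by
            refine Finset.sum_congr rfl fun j _ => Finset.sum_congr rfl fun k _ => ?_
            rw [Finset.sum_mul, Finset.sum_mul_sum]
    rw [e]
    calc (∑ j, ∑ k, (∑ i, a i * s i * x i j) * CovW ξ j k * (∑ i', a i' * s i' * x i' k))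
        ≤ ∑ i, (a i) ^ 2 := chain ξ a
      _ = 1 := ha
  · -- Part 2: log-concavity
    have hc2nn : (0:ℝ) ≤ (2 * Real.pi) ^ (-(n:ℝ)/2) :=
      Real.rpow_nonneg (by positivity) _
    have hp₀nn : ∀ w, 0 ≤ p₀ w := fun w => by rw [hp₀ w]; positivity
    have hpnn : ∀ w, 0 ≤ p w := fun w => by
      rw [hp w]
      have := hp₀nn w
      positivity
    have hJnn : ∀ (w : Fin d → ℝ) ξ, 0 ≤ joint w ξ := fun w ξ => by
      rw [hjoint w ξ]
      have h1 := hpnn w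
      positivity
    have hcontt : ∀ i, Continuous fun w : Fin d → ℝ => ∑ j, x i j * w j :=
      fun i => continuous_finset_sum _ fun j _ => continuous_const.mul (continuous_apply j)
    have hcontE : Continuous fun w : Fin d → ℝ =>
        Real.exp (α * ∑ i, r i * ψ (∑ j, x i j * w j)) :=
      Real.continuous_exp.comp (continuous_const.mul (continuous_finset_sum _ fun i _ =>
        continuous_const.mul (hψ.continuous.comp (hcontt i))))
    have hcontp₀ : Continuous p₀ := by
      have e : p₀ = fun w => (2 * Real.pi * σ₀ ^ 2) ^ (-(d:ℝ)/2) *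
          Real.exp (-(∑ j, (w j) ^ 2) / (2 * σ₀ ^ 2)) := funext hp₀
      rw [e]
      exact continuous_const.mul (Real.continuous_exp.comp
        (((continuous_finset_sum _ fun j _ => (continuous_apply j).pow 2).neg).div_const _))
    have hcontp : Continuous p := by
      have e : p = fun w => Real.exp (α * ∑ i, r i * ψ (∑ j, x i j * w j)) * p₀ w / Z :=
        funext hp
      rw [e]
      exact (hcontE.mul hcontp₀).div_const Z
    have hcontJ : ∀ ξ, Continuous fun w : Fin d → ℝ => joint w ξ := by
      intro ξ
      have e : (fun w : Fin d → ℝ => joint w ξ) = fun w => p w * ((2 * Real.pi) ^ (-(n:ℝ)/2) *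
          Real.exp (-(∑ i, (ξ i - s i * (∑ j, x i j * w j)) ^ 2) / 2)) :=
        funext fun w => hjoint w ξ
      rw [e]
      exact hcontp.mul (continuous_const.mul (Real.continuous_exp.comp
        (((continuous_finset_sum _ fun i _ =>
          ((continuous_const.sub (continuous_const.mul (hcontt i))).pow 2)).neg).div_const _)))
    have hIntJ : ∀ ξ, Integrable (fun w : Fin d → ℝ => joint w ξ) := by
      intro ξ
      by_contra h
      have e := hpξ ξ
      rw [integral_undef h] at e
      exact (hpξpos ξ).ne' e
    have hZint : Integrable (fun w : Fin d → ℝ =>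
        Real.exp (α * ∑ i, r i * ψ (∑ j, x i j * w j)) * p₀ w) := by
      by_contra h
      rw [integral_undef h] at hZ
      exact hZpos.ne' hZ
    have hIntp : Integrable p := by
      have e : p = fun w => Real.exp (α * ∑ i, r i * ψ (∑ j, x i j * w j)) * p₀ w / Z :=
        funext hp
      rw [e]
      exact hZint.div_const Z
    -- pointwise product bound for moments
    have habs2 : ∀ (w : Fin d → ℝ) (j k : Fin d), |w j * w k| ≤ ∏ l, (1 + (w l) ^ 2) := by
      intro w j k
      have h1 : ∀ l ∈ Finset.univ, (1:ℝ) ≤ 1 + (w l) ^ 2 :=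
        fun l _ => by nlinarith [sq_nonneg (w l)]
      rcases eq_or_ne j k with rfl | hne
      · calc |w j * w j| = |w j| ^ 2 := by rw [abs_mul, pow_two]
          _ = (w j) ^ 2 := sq_abs _
          _ ≤ 1 + (w j) ^ 2 := by linarith
          _ ≤ ∏ l, (1 + (w l) ^ 2) :=
              aux_single_le_prod (fun l => 1 + (w l) ^ 2)
                (fun l => by show (1:ℝ) ≤ 1 + (w l) ^ 2; nlinarith [sq_nonneg (w l)]) j
      · calc |w j * w k| ≤ (1 + (w j) ^ 2) * (1 + (w k) ^ 2) := by
              rw [abs_mul]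
              nlinarith [sq_abs (w j), sq_abs (w k), abs_nonneg (w j), abs_nonneg (w k),
                sq_nonneg (|w j| - |w k|), sq_nonneg (|w j| * |w k| - 1)]
          _ ≤ ∏ l, (1 + (w l) ^ 2) :=
              aux_pair_le_prod (fun l => 1 + (w l) ^ 2)
                (fun l => by show (1:ℝ) ≤ 1 + (w l) ^ 2; nlinarith [sq_nonneg (w l)]) hne
    have habs1 : ∀ (w : Fin d → ℝ) (j : Fin d), |w j| ≤ ∏ l, (1 + (w l) ^ 2) := by
      intro w j
      have h1 : ∀ l ∈ Finset.univ, (1:ℝ) ≤ 1 + (w l) ^ 2 :=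
        fun l _ => by nlinarith [sq_nonneg (w l)]
      calc |w j| ≤ 1 + (w j) ^ 2 := by nlinarith [sq_abs (w j), sq_nonneg (|w j| - 1), abs_nonneg (w j)]
        _ ≤ ∏ l, (1 + (w l) ^ 2) :=
            aux_single_le_prod (fun l => 1 + (w l) ^ 2)
              (fun l => by show (1:ℝ) ≤ 1 + (w l) ^ 2; nlinarith [sq_nonneg (w l)]) j
    -- master pointwise bound with Gaussian tails
    have hmaster : ∀ ξ : Fin n → ℝ, ∃ C : ℝ, 0 ≤ C ∧ ∃ cc : Fin d → ℝ,
        ∀ w : Fin d → ℝ, joint w ξ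
          ≤ C * ∏ j, Real.exp (cc j * |w j| - (1/(2*σ₀^2)) * (w j) ^ 2) := by
      intro ξ
      have hKcpos : 0 < (2*Real.pi*σ₀^2) ^ (-(d:ℝ)/2) * (2*Real.pi) ^ (-(n:ℝ)/2) / Z := by
        have h1 : (0:ℝ) < (2*Real.pi*σ₀^2) ^ (-(d:ℝ)/2) :=
          Real.rpow_pos_of_pos (by positivity) _
        have h2 : (0:ℝ) < (2*Real.pi) ^ (-(n:ℝ)/2) :=
          Real.rpow_pos_of_pos (by positivity) _
        positivity
      refine ⟨((2*Real.pi*σ₀^2) ^ (-(d:ℝ)/2) * (2*Real.pi) ^ (-(n:ℝ)/2) / Z)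
        * Real.exp (∑ i, α * |r i| * |ψ 0|), by positivity,
        fun j => ∑ i, (α * |r i| * |deriv ψ 0| + |ξ i| * s i) * |x i j|, ?_⟩
      intro w
      have hjw : joint w ξ = ((2*Real.pi*σ₀^2) ^ (-(d:ℝ)/2) * (2*Real.pi) ^ (-(n:ℝ)/2) / Z)
          * Real.exp ((α * ∑ i, r i * ψ (∑ j, x i j * w j))
            + (-(∑ j, (w j) ^ 2) / (2*σ₀^2))
            + (-(∑ i, (ξ i - s i * (∑ j, x i j * w j)) ^ 2) / 2)) := by
        rw [hjoint w ξ, hp w, hp₀ w, Real.exp_add, Real.exp_add]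
        ring
      have hEbound : (α * ∑ i, r i * ψ (∑ j, x i j * w j))
            + (-(∑ j, (w j) ^ 2) / (2*σ₀^2))
            + (-(∑ i, (ξ i - s i * (∑ j, x i j * w j)) ^ 2) / 2)
          ≤ (∑ i, α * |r i| * |ψ 0|)
            + ∑ j, ((∑ i, (α * |r i| * |deriv ψ 0| + |ξ i| * s i) * |x i j|) * |w j|
                - (1/(2*σ₀^2)) * (w j) ^ 2) := by
        have stepA : ∀ i, α * (r i * ψ (∑ j, x i j * w j))
              + (-(ξ i - s i * (∑ j, x i j * w j)) ^ 2 / 2)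
            ≤ α * |r i| * |ψ 0|
              + (α * |r i| * |deriv ψ 0| + |ξ i| * s i) * |∑ j, x i j * w j| := by
          intro i
          set T : ℝ := ∑ j, x i j * w j with hT
          have htay := aux_taylor_abs ψ c hψ hψ'' T
          have h1 : α * (r i * ψ (∑ j, x i j * w j)) ≤ α * |r i| *
              (|ψ 0| + |deriv ψ 0| * |∑ j, x i j * w j| + c/2 * (∑ j, x i j * w j) ^ 2) := by
            have ha1 : r i * ψ (∑ j, x i j * w j) ≤ |r i| * |ψ (∑ j, x i j * w j)| := by
              calc r i * ψ (∑ j, x i j * w j) ≤ |r i * ψ (∑ j, x i j * w j)| := le_abs_self _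
                _ = |r i| * |ψ (∑ j, x i j * w j)| := abs_mul _ _
            have ha2 : |r i| * |ψ (∑ j, x i j * w j)| ≤ |r i| *
                (|ψ 0| + |deriv ψ 0| * |∑ j, x i j * w j| + c/2 * (∑ j, x i j * w j) ^ 2) :=
              mul_le_mul_of_nonneg_left htay (abs_nonneg _)
            calc α * (r i * ψ (∑ j, x i j * w j))
                ≤ α * (|r i| * (|ψ 0| + |deriv ψ 0| * |∑ j, x i j * w j|
                    + c/2 * (∑ j, x i j * w j) ^ 2)) :=
                  mul_le_mul_of_nonneg_left (le_trans ha1 ha2) hα.le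
              _ = α * |r i| * (|ψ 0| + |deriv ψ 0| * |∑ j, x i j * w j|
                    + c/2 * (∑ j, x i j * w j) ^ 2) := by ring
          have h2 : -(ξ i - s i * (∑ j, x i j * w j)) ^ 2 / 2
              ≤ -((α * c * |r i|)/2) * (∑ j, x i j * w j) ^ 2
                + |ξ i| * s i * |∑ j, x i j * w j| := by
            have hsqi := hs_sq i
            have habsi : ξ i * (s i * (∑ j, x i j * w j))
                ≤ |ξ i| * (s i * |∑ j, x i j * w j|) := by
              calc ξ i * (s i * (∑ j, x i j * w j))
                  ≤ |ξ i * (s i * (∑ j, x i j * w j))| := le_abs_self _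
                _ = |ξ i| * (s i * |∑ j, x i j * w j|) := by
                    rw [abs_mul, abs_mul, abs_of_nonneg (hs_nn i)]
            nlinarith [sq_nonneg (ξ i), hsqi, habsi]
          nlinarith [h1, h2, abs_nonneg (r i)]
        have e1 : α * (∑ i, r i * ψ (∑ j, x i j * w j))
            = ∑ i, α * (r i * ψ (∑ j, x i j * w j)) := Finset.mul_sum _ _ _
        have e2 : -(∑ i, (ξ i - s i * (∑ j, x i j * w j)) ^ 2) / 2
            = ∑ i, (-(ξ i - s i * (∑ j, x i j * w j)) ^ 2 / 2) := by
          rw [← Finset.sum_div, ← Finset.sum_neg_distrib]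
        have hsumA : (∑ i, (α * (r i * ψ (∑ j, x i j * w j))
              + (-(ξ i - s i * (∑ j, x i j * w j)) ^ 2 / 2)))
            ≤ (∑ i, α * |r i| * |ψ 0|)
              + ∑ i, (α * |r i| * |deriv ψ 0| + |ξ i| * s i) * |∑ j, x i j * w j| := by
          rw [← Finset.sum_add_distrib]
          exact Finset.sum_le_sum fun i _ => stepA i
        have hlin : (∑ i, (α * |r i| * |deriv ψ 0| + |ξ i| * s i) * |∑ j, x i j * w j|)
            ≤ ∑ j, (∑ i, (α * |r i| * |deriv ψ 0| + |ξ i| * s i) * |x i j|) * |w j| := by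
          have hβ : ∀ i, 0 ≤ α * |r i| * |deriv ψ 0| + |ξ i| * s i := fun i => by
            have := hs_nn i; positivity
          calc (∑ i, (α * |r i| * |deriv ψ 0| + |ξ i| * s i) * |∑ j, x i j * w j|)
              ≤ ∑ i, (α * |r i| * |deriv ψ 0| + |ξ i| * s i) * (∑ j, |x i j| * |w j|) := by
                refine Finset.sum_le_sum fun i _ => ?_
                refine mul_le_mul_of_nonneg_left ?_ (hβ i)
                calc |∑ j, x i j * w j| ≤ ∑ j, |x i j * w j| := Finset.abs_sum_le_sum_abs _ _
                  _ = ∑ j, |x i j| * |w j| :=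
                      Finset.sum_congr rfl fun j _ => abs_mul _ _
            _ = ∑ i, ∑ j, (α * |r i| * |deriv ψ 0| + |ξ i| * s i) * (|x i j| * |w j|) :=
                Finset.sum_congr rfl fun i _ => Finset.mul_sum _ _ _
            _ = ∑ j, ∑ i, (α * |r i| * |deriv ψ 0| + |ξ i| * s i) * (|x i j| * |w j|) :=
                Finset.sum_comm
            _ = ∑ j, (∑ i, (α * |r i| * |deriv ψ 0| + |ξ i| * s i) * |x i j|) * |w j| := by
                refine Finset.sum_congr rfl fun j _ => ?_
                rw [Finset.sum_mul]
                exact Finset.sum_congr rfl fun i _ => by ring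
        have hcomb : (α * ∑ i, r i * ψ (∑ j, x i j * w j))
            + (-(∑ i, (ξ i - s i * (∑ j, x i j * w j)) ^ 2) / 2)
            ≤ (∑ i, α * |r i| * |ψ 0|)
              + ∑ j, (∑ i, (α * |r i| * |deriv ψ 0| + |ξ i| * s i) * |x i j|) * |w j| := by
          rw [e1, e2, ← Finset.sum_add_distrib]
          calc (∑ i, (α * (r i * ψ (∑ j, x i j * w j))
                + (-(ξ i - s i * (∑ j, x i j * w j)) ^ 2 / 2)))
              ≤ ∑ i, (α * |r i| * |ψ 0|
                  + (α * |r i| * |deriv ψ 0| + |ξ i| * s i) * |∑ j, x i j * w j|) :=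
                Finset.sum_le_sum fun i _ => stepA i
            _ = (∑ i, α * |r i| * |ψ 0|)
                + ∑ i, (α * |r i| * |deriv ψ 0| + |ξ i| * s i) * |∑ j, x i j * w j| :=
                Finset.sum_add_distrib
            _ ≤ (∑ i, α * |r i| * |ψ 0|)
                + ∑ j, (∑ i, (α * |r i| * |deriv ψ 0| + |ξ i| * s i) * |x i j|) * |w j| := by
                linarith [hlin]
        have e4 : (∑ j, ((∑ i, (α * |r i| * |deriv ψ 0| + |ξ i| * s i) * |x i j|) * |w j|
              - (1/(2*σ₀^2)) * (w j) ^ 2))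
            = (∑ j, (∑ i, (α * |r i| * |deriv ψ 0| + |ξ i| * s i) * |x i j|) * |w j|)
              - ∑ j, (1/(2*σ₀^2)) * (w j) ^ 2 := Finset.sum_sub_distrib _ _
        have e5 : -(∑ j, (w j) ^ 2) / (2*σ₀^2) = -(∑ j, (1/(2*σ₀^2)) * (w j) ^ 2) := by
          rw [neg_div, Finset.sum_div]
          congr 1
          exact Finset.sum_congr rfl fun j _ => by ring
        rw [e4, e5]
        linarith [hcomb]
      rw [hjw]
      have efin : ((2*Real.pi*σ₀^2) ^ (-(d:ℝ)/2) * (2*Real.pi) ^ (-(n:ℝ)/2) / Z)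
            * Real.exp (∑ i, α * |r i| * |ψ 0|)
            * ∏ j, Real.exp ((∑ i, (α * |r i| * |deriv ψ 0| + |ξ i| * s i) * |x i j|) * |w j|
                - (1/(2*σ₀^2)) * (w j) ^ 2)
          = ((2*Real.pi*σ₀^2) ^ (-(d:ℝ)/2) * (2*Real.pi) ^ (-(n:ℝ)/2) / Z)
            * Real.exp ((∑ i, α * |r i| * |ψ 0|)
              + ∑ j, ((∑ i, (α * |r i| * |deriv ψ 0| + |ξ i| * s i) * |x i j|) * |w j|
                - (1/(2*σ₀^2)) * (w j) ^ 2)) := by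
        rw [Real.exp_add, ← Real.exp_sum]
        ring
      rw [efin]
      exact mul_le_mul_of_nonneg_left (Real.exp_le_exp.mpr hEbound) hKcpos.le
    -- integrability of first and second moments
    have hGint : ∀ cc : Fin d → ℝ, Integrable (fun w : Fin d → ℝ =>
        ∏ l, ((1 + (w l) ^ 2) * Real.exp (cc l * |w l| - (1/(2*σ₀^2)) * (w l) ^ 2))) := by
      intro cc
      exact Integrable.fintype_prod
        (f := fun l (t : ℝ) => (1 + t ^ 2) * Real.exp (cc l * |t| - (1/(2*σ₀^2)) * t ^ 2))
        (fun l => aux_int1d (cc l) (by positivity))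
    have hIww : ∀ (ξ : Fin n → ℝ) (j k : Fin d),
        Integrable (fun w : Fin d → ℝ => w j * w k * joint w ξ) := by
      intro ξ j k
      obtain ⟨C, hC0, cc, hbd⟩ := hmaster ξ
      refine ((hGint cc).const_mul C).mono' ?_ ?_
      · exact Continuous.aestronglyMeasurable
          (((continuous_apply j).mul (continuous_apply k)).mul (hcontJ ξ))
      · refine Filter.Eventually.of_forall fun w => ?_
        rw [Real.norm_eq_abs, abs_mul, abs_of_nonneg (hJnn w ξ)]
        have hexpnn : (0:ℝ) ≤ ∏ l, Real.exp (cc l * |w l| - (1/(2*σ₀^2)) * (w l) ^ 2) :=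
          Finset.prod_nonneg fun l _ => Real.exp_nonneg _
        have hprodnn : (0:ℝ) ≤ ∏ l, (1 + (w l) ^ 2) :=
          Finset.prod_nonneg fun l _ => by nlinarith [sq_nonneg (w l)]
        have h1 : |w j * w k| * joint w ξ
            ≤ (∏ l, (1 + (w l) ^ 2)) * (C * ∏ l, Real.exp (cc l * |w l|
                - (1/(2*σ₀^2)) * (w l) ^ 2)) :=
          mul_le_mul (habs2 w j k) (hbd w) (hJnn w ξ) hprodnn
        have h2 : (∏ l, (1 + (w l) ^ 2)) * (C * ∏ l, Real.exp (cc l * |w l|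
              - (1/(2*σ₀^2)) * (w l) ^ 2))
            = C * ∏ l, ((1 + (w l) ^ 2) * Real.exp (cc l * |w l|
                - (1/(2*σ₀^2)) * (w l) ^ 2)) := by
          rw [Finset.prod_mul_distrib]
          ring
        linarith [h1, h2.symm.le, h2.le]
    have hIw : ∀ (ξ : Fin n → ℝ) (j : Fin d),
        Integrable (fun w : Fin d → ℝ => w j * joint w ξ) := by
      intro ξ j
      obtain ⟨C, hC0, cc, hbd⟩ := hmaster ξ
      refine ((hGint cc).const_mul C).mono' ?_ ?_
      · exact Continuous.aestronglyMeasurable ((continuous_apply j).mul (hcontJ ξ))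
      · refine Filter.Eventually.of_forall fun w => ?_
        rw [Real.norm_eq_abs, abs_mul, abs_of_nonneg (hJnn w ξ)]
        have hprodnn : (0:ℝ) ≤ ∏ l, (1 + (w l) ^ 2) :=
          Finset.prod_nonneg fun l _ => by nlinarith [sq_nonneg (w l)]
        have h1 : |w j| * joint w ξ
            ≤ (∏ l, (1 + (w l) ^ 2)) * (C * ∏ l, Real.exp (cc l * |w l|
                - (1/(2*σ₀^2)) * (w l) ^ 2)) :=
          mul_le_mul (habs1 w j) (hbd w) (hJnn w ξ) hprodnn
        have h2 : (∏ l, (1 + (w l) ^ 2)) * (C * ∏ l, Real.exp (cc l * |w l|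
              - (1/(2*σ₀^2)) * (w l) ^ 2))
            = C * ∏ l, ((1 + (w l) ^ 2) * Real.exp (cc l * |w l|
                - (1/(2*σ₀^2)) * (w l) ^ 2)) := by
          rw [Finset.prod_mul_distrib]
          ring
        linarith [h1, h2.le]
    -- concavity along each line
    have keyline : ∀ (ξ₀ v : Fin n → ℝ),
        ConcaveOn ℝ Set.univ (fun t : ℝ => Real.log (pξ (ξ₀ + t • v))) := by
      intro ξ₀ v
      have hV0 : (0:ℝ) ≤ ∑ i, (v i) ^ 2 := Finset.sum_nonneg fun i _ => sq_nonneg _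
      have hJeq : ∀ (t : ℝ) (w : Fin d → ℝ), joint w (ξ₀ + t • v)
          = p w * ((2 * Real.pi) ^ (-(n:ℝ)/2) *
              Real.exp (-(∑ i, (ξ₀ i + t * v i - s i * (∑ j, x i j * w j)) ^ 2) / 2)) := by
        intro t w
        rw [hjoint]
        simp only [Pi.add_apply, Pi.smul_apply, smul_eq_mul]
        rfl
      have hcontY : ∀ t : ℝ, Continuous fun w : Fin d → ℝ =>
          ∑ i, v i * (ξ₀ i + t * v i - s i * (∑ j, x i j * w j)) :=
        fun t => continuous_finset_sum _ fun i _ =>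
          continuous_const.mul (continuous_const.sub (continuous_const.mul (hcontt i)))
      have hz : ∀ (w : Fin d → ℝ) (t : ℝ) (i : Fin n),
          HasDerivAt (fun t : ℝ => ξ₀ i + t * v i - s i * (∑ j, x i j * w j)) (v i) t := by
        intro w t i
        simpa using (((hasDerivAt_id t).mul_const (v i)).const_add (ξ₀ i)).sub_const
          (s i * (∑ j, x i j * w j))
      have hJd : ∀ (w : Fin d → ℝ) (t : ℝ), HasDerivAt (fun t => joint w (ξ₀ + t • v))
          (-(∑ i, v i * (ξ₀ i + t * v i - s i * (∑ j, x i j * w j)))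
            * joint w (ξ₀ + t • v)) t := by
        intro w t
        have hsum : HasDerivAt (fun t : ℝ =>
            ∑ i, (ξ₀ i + t * v i - s i * (∑ j, x i j * w j)) ^ 2)
            (∑ i, 2 * (ξ₀ i + t * v i - s i * (∑ j, x i j * w j)) * v i) t := by
          apply HasDerivAt.fun_sum
          intro i _
          have h1 := (hz w t i).fun_pow 2
          simpa using h1
        have hg := (hsum.neg.div_const 2).exp
        have hfin := HasDerivAt.const_mul (p w)
          (HasDerivAt.const_mul ((2 * Real.pi) ^ (-(n:ℝ)/2)) hg)
        have hfun : (fun t => joint w (ξ₀ + t • v))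
            = fun t => p w * ((2 * Real.pi) ^ (-(n:ℝ)/2) *
              Real.exp (-(∑ i, (ξ₀ i + t * v i - s i * (∑ j, x i j * w j)) ^ 2) / 2)) :=
          funext fun t => hJeq t w
        rw [hfun]
        refine hfin.congr_deriv ?_
        simp only [Pi.neg_apply]
        rw [hJeq t w]
        have e2 : (∑ i, 2 * (ξ₀ i + t * v i - s i * (∑ j, x i j * w j)) * v i)
            = 2 * ∑ i, v i * (ξ₀ i + t * v i - s i * (∑ j, x i j * w j)) := by
          rw [Finset.mul_sum]
          exact Finset.sum_congr rfl fun i _ => by ring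
        rw [e2]
        ring
      -- first differentiation under the integral sign
      have hround1 : ∀ t₀ : ℝ,
          Integrable (fun w : Fin d → ℝ =>
            -(∑ i, v i * (ξ₀ i + t₀ * v i - s i * (∑ j, x i j * w j)))
              * joint w (ξ₀ + t₀ • v)) ∧
          HasDerivAt (fun t => pξ (ξ₀ + t • v))
            (∫ w : Fin d → ℝ,
              -(∑ i, v i * (ξ₀ i + t₀ * v i - s i * (∑ j, x i j * w j)))
                * joint w (ξ₀ + t₀ • v)) t₀ := by
        intro t₀
        have hbnd : ∀ (w : Fin d → ℝ) (t : ℝ),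
            ‖-(∑ i, v i * (ξ₀ i + t * v i - s i * (∑ j, x i j * w j)))
              * joint w (ξ₀ + t • v)‖
            ≤ (∑ i, |v i|) * ((2 * Real.pi) ^ (-(n:ℝ)/2) * p w) := by
          intro w t
          rw [Real.norm_eq_abs, abs_mul, abs_neg, abs_of_nonneg (hJnn w _), hJeq t w]
          set E : ℝ := Real.exp
            (-(∑ i, (ξ₀ i + t * v i - s i * (∑ j, x i j * w j)) ^ 2) / 2) with hE
          have hE0 : 0 ≤ E := Real.exp_nonneg _
          have hEi : ∀ i, E ≤ Real.exp
              (-((ξ₀ i + t * v i - s i * (∑ j, x i j * w j)) ^ 2) / 2) := by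
            intro i
            rw [hE]
            apply Real.exp_le_exp.mpr
            have h1 : (ξ₀ i + t * v i - s i * (∑ j, x i j * w j)) ^ 2
                ≤ ∑ i', (ξ₀ i' + t * v i' - s i' * (∑ j, x i' j * w j)) ^ 2 :=
              Finset.single_le_sum
                (f := fun i => (ξ₀ i + t * v i - s i * (∑ j, x i j * w j)) ^ 2)
                (fun i _ => sq_nonneg _) (Finset.mem_univ i)
            linarith
          have hYE : |∑ i, v i * (ξ₀ i + t * v i - s i * (∑ j, x i j * w j))| * E
              ≤ ∑ i, |v i| := by
            calc |∑ i, v i * (ξ₀ i + t * v i - s i * (∑ j, x i j * w j))| * E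
                ≤ (∑ i, |v i| * |ξ₀ i + t * v i - s i * (∑ j, x i j * w j)|) * E := by
                  apply mul_le_mul_of_nonneg_right _ hE0
                  calc |∑ i, v i * (ξ₀ i + t * v i - s i * (∑ j, x i j * w j))|
                      ≤ ∑ i, |v i * (ξ₀ i + t * v i - s i * (∑ j, x i j * w j))| :=
                        Finset.abs_sum_le_sum_abs _ _
                    _ = ∑ i, |v i| * |ξ₀ i + t * v i - s i * (∑ j, x i j * w j)| :=
                        Finset.sum_congr rfl fun i _ => abs_mul _ _
              _ = ∑ i, |v i| * |ξ₀ i + t * v i - s i * (∑ j, x i j * w j)| * E :=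
                  Finset.sum_mul _ _ _
              _ ≤ ∑ i, |v i| := by
                  refine Finset.sum_le_sum fun i _ => ?_
                  have h1 : |ξ₀ i + t * v i - s i * (∑ j, x i j * w j)| * E
                      ≤ |ξ₀ i + t * v i - s i * (∑ j, x i j * w j)|
                        * Real.exp (-((ξ₀ i + t * v i - s i * (∑ j, x i j * w j)) ^ 2) / 2) :=
                    mul_le_mul_of_nonneg_left (hEi i) (abs_nonneg _)
                  have h2 := aux_abs_exp (ξ₀ i + t * v i - s i * (∑ j, x i j * w j))
                  calc |v i| * |ξ₀ i + t * v i - s i * (∑ j, x i j * w j)| * E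
                      = |v i| * (|ξ₀ i + t * v i - s i * (∑ j, x i j * w j)| * E) := by ring
                    _ ≤ |v i| * 1 :=
                        mul_le_mul_of_nonneg_left (le_trans h1 h2) (abs_nonneg _)
                    _ = |v i| := mul_one _
          calc |∑ i, v i * (ξ₀ i + t * v i - s i * (∑ j, x i j * w j))|
              * (p w * ((2 * Real.pi) ^ (-(n:ℝ)/2) * E))
              = (|∑ i, v i * (ξ₀ i + t * v i - s i * (∑ j, x i j * w j))| * E)
                * ((2 * Real.pi) ^ (-(n:ℝ)/2) * p w) := by ring
            _ ≤ (∑ i, |v i|) * ((2 * Real.pi) ^ (-(n:ℝ)/2) * p w) :=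
                mul_le_mul_of_nonneg_right hYE (mul_nonneg hc2nn (hpnn w))
        obtain ⟨hint, hder⟩ := hasDerivAt_integral_of_dominated_loc_of_deriv_le
          (μ := (volume : Measure (Fin d → ℝ)))
          (F := fun (t : ℝ) (w : Fin d → ℝ) => joint w (ξ₀ + t • v))
          (F' := fun (t : ℝ) (w : Fin d → ℝ) =>
            -(∑ i, v i * (ξ₀ i + t * v i - s i * (∑ j, x i j * w j))) * joint w (ξ₀ + t • v))
          (bound := fun w => (∑ i, |v i|) * ((2 * Real.pi) ^ (-(n:ℝ)/2) * p w))
          Filter.univ_mem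
          (Filter.Eventually.of_forall fun t => (hcontJ (ξ₀ + t • v)).aestronglyMeasurable)
          (hIntJ _)
          (((hcontY t₀).neg.mul (hcontJ _)).aestronglyMeasurable)
          (Filter.Eventually.of_forall fun w t _ => hbnd w t)
          ((hIntp.const_mul _).const_mul _)
          (Filter.Eventually.of_forall fun w t _ => hJd w t)
        refine ⟨hint, ?_⟩
        have e : (fun t : ℝ => ∫ w : Fin d → ℝ, joint w (ξ₀ + t • v))
            = fun t => pξ (ξ₀ + t • v) := funext fun t => (hpξ _).symm
        rwa [e] at hder
      -- second differentiation under the integral sign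
      have hround2 : ∀ t₀ : ℝ,
          Integrable (fun w : Fin d → ℝ =>
            ((∑ i, v i * (ξ₀ i + t₀ * v i - s i * (∑ j, x i j * w j))) ^ 2 - ∑ i, (v i) ^ 2)
              * joint w (ξ₀ + t₀ • v)) ∧
          HasDerivAt (fun t : ℝ => ∫ w : Fin d → ℝ,
              -(∑ i, v i * (ξ₀ i + t * v i - s i * (∑ j, x i j * w j)))
                * joint w (ξ₀ + t • v))
            (∫ w : Fin d → ℝ,
              ((∑ i, v i * (ξ₀ i + t₀ * v i - s i * (∑ j, x i j * w j))) ^ 2 - ∑ i, (v i) ^ 2)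
                * joint w (ξ₀ + t₀ • v)) t₀ := by
        intro t₀
        have hdiff2 : ∀ (w : Fin d → ℝ) (t : ℝ), HasDerivAt
            (fun t : ℝ => -(∑ i, v i * (ξ₀ i + t * v i - s i * (∑ j, x i j * w j)))
              * joint w (ξ₀ + t • v))
            (((∑ i, v i * (ξ₀ i + t * v i - s i * (∑ j, x i j * w j))) ^ 2 - ∑ i, (v i) ^ 2)
              * joint w (ξ₀ + t • v)) t := by
          intro w t
          have hYd : HasDerivAt (fun t : ℝ =>
              ∑ i, v i * (ξ₀ i + t * v i - s i * (∑ j, x i j * w j))) (∑ i, (v i) ^ 2) t := by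
            have h1 := HasDerivAt.fun_sum (fun i (_ : i ∈ Finset.univ) =>
              HasDerivAt.const_mul (v i) (hz w t i))
            exact h1.congr_deriv (Finset.sum_congr rfl fun i _ => by ring)
          have h2 := (hYd.neg).mul (hJd w t)
          exact h2.congr_deriv (by simp only [Pi.neg_apply]; ring)
        have hbnd2 : ∀ (w : Fin d → ℝ) (t : ℝ),
            ‖((∑ i, v i * (ξ₀ i + t * v i - s i * (∑ j, x i j * w j))) ^ 2 - ∑ i, (v i) ^ 2)
              * joint w (ξ₀ + t • v)‖
            ≤ (3 * ∑ i, (v i) ^ 2) * ((2 * Real.pi) ^ (-(n:ℝ)/2) * p w) := by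
          intro w t
          rw [Real.norm_eq_abs, abs_mul, abs_of_nonneg (hJnn w _), hJeq t w]
          set S : ℝ := ∑ i, (ξ₀ i + t * v i - s i * (∑ j, x i j * w j)) ^ 2 with hS
          have hS0 : 0 ≤ S := Finset.sum_nonneg fun i _ => sq_nonneg _
          have hE0 : (0:ℝ) ≤ Real.exp (-S / 2) := Real.exp_nonneg _
          have hE1 : Real.exp (-S / 2) ≤ 1 := Real.exp_le_one_iff.mpr (by linarith)
          have habsY : |∑ i, v i * (ξ₀ i + t * v i - s i * (∑ j, x i j * w j))|
              ≤ ∑ i, |v i| * |ξ₀ i + t * v i - s i * (∑ j, x i j * w j)| := by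
            calc |∑ i, v i * (ξ₀ i + t * v i - s i * (∑ j, x i j * w j))|
                ≤ ∑ i, |v i * (ξ₀ i + t * v i - s i * (∑ j, x i j * w j))| :=
                  Finset.abs_sum_le_sum_abs _ _
              _ = ∑ i, |v i| * |ξ₀ i + t * v i - s i * (∑ j, x i j * w j)| :=
                  Finset.sum_congr rfl fun i _ => abs_mul _ _
          have hcs := Finset.sum_mul_sq_le_sq_mul_sq Finset.univ (fun i => |v i|)
            (fun i => |ξ₀ i + t * v i - s i * (∑ j, x i j * w j)|)
          have hY2 : (∑ i, v i * (ξ₀ i + t * v i - s i * (∑ j, x i j * w j))) ^ 2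
              ≤ (∑ i, (v i) ^ 2) * S := by
            calc (∑ i, v i * (ξ₀ i + t * v i - s i * (∑ j, x i j * w j))) ^ 2
                = |∑ i, v i * (ξ₀ i + t * v i - s i * (∑ j, x i j * w j))| ^ 2 :=
                  (sq_abs _).symm
              _ ≤ (∑ i, |v i| * |ξ₀ i + t * v i - s i * (∑ j, x i j * w j)|) ^ 2 :=
                  pow_le_pow_left₀ (abs_nonneg _) habsY 2
              _ ≤ (∑ i, |v i| ^ 2) * ∑ i, |ξ₀ i + t * v i - s i * (∑ j, x i j * w j)| ^ 2 :=
                  hcs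
              _ = (∑ i, (v i) ^ 2) * S := by
                  rw [hS]
                  congr 1
                  · exact Finset.sum_congr rfl fun i _ => sq_abs _
                  · exact Finset.sum_congr rfl fun i _ => sq_abs _
          have habsd : |(∑ i, v i * (ξ₀ i + t * v i - s i * (∑ j, x i j * w j))) ^ 2
                - ∑ i, (v i) ^ 2|
              ≤ (∑ i, v i * (ξ₀ i + t * v i - s i * (∑ j, x i j * w j))) ^ 2
                + ∑ i, (v i) ^ 2 := by
            calc |(∑ i, v i * (ξ₀ i + t * v i - s i * (∑ j, x i j * w j))) ^ 2
                  - ∑ i, (v i) ^ 2|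
                = |(∑ i, v i * (ξ₀ i + t * v i - s i * (∑ j, x i j * w j))) ^ 2
                  + -(∑ i, (v i) ^ 2)| := by rw [sub_eq_add_neg]
              _ ≤ |(∑ i, v i * (ξ₀ i + t * v i - s i * (∑ j, x i j * w j))) ^ 2|
                  + |-(∑ i, (v i) ^ 2)| := abs_add_le _ _
              _ = (∑ i, v i * (ξ₀ i + t * v i - s i * (∑ j, x i j * w j))) ^ 2
                  + ∑ i, (v i) ^ 2 := by
                  rw [abs_neg, abs_of_nonneg (sq_nonneg _), abs_of_nonneg hV0]
          have h4 : ((∑ i, v i * (ξ₀ i + t * v i - s i * (∑ j, x i j * w j))) ^ 2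
                + ∑ i, (v i) ^ 2) * Real.exp (-S / 2) ≤ 3 * ∑ i, (v i) ^ 2 := by
            have e1 : (∑ i, v i * (ξ₀ i + t * v i - s i * (∑ j, x i j * w j))) ^ 2
                * Real.exp (-S / 2) ≤ (∑ i, (v i) ^ 2) * (S * Real.exp (-S / 2)) := by
              calc (∑ i, v i * (ξ₀ i + t * v i - s i * (∑ j, x i j * w j))) ^ 2
                  * Real.exp (-S / 2)
                  ≤ ((∑ i, (v i) ^ 2) * S) * Real.exp (-S / 2) :=
                    mul_le_mul_of_nonneg_right hY2 hE0
                _ = (∑ i, (v i) ^ 2) * (S * Real.exp (-S / 2)) := by ring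
            have e2 : S * Real.exp (-S / 2) ≤ 2 := aux_sq_exp S hS0
            have e3 : (∑ i, (v i) ^ 2) * (S * Real.exp (-S / 2)) ≤ (∑ i, (v i) ^ 2) * 2 :=
              mul_le_mul_of_nonneg_left e2 hV0
            have e4 : (∑ i, (v i) ^ 2) * Real.exp (-S / 2) ≤ ∑ i, (v i) ^ 2 := by
              calc (∑ i, (v i) ^ 2) * Real.exp (-S / 2) ≤ (∑ i, (v i) ^ 2) * 1 :=
                    mul_le_mul_of_nonneg_left hE1 hV0
                _ = ∑ i, (v i) ^ 2 := mul_one _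
            have e5 : ((∑ i, v i * (ξ₀ i + t * v i - s i * (∑ j, x i j * w j))) ^ 2
                  + ∑ i, (v i) ^ 2) * Real.exp (-S / 2)
                = (∑ i, v i * (ξ₀ i + t * v i - s i * (∑ j, x i j * w j))) ^ 2
                    * Real.exp (-S / 2)
                  + (∑ i, (v i) ^ 2) * Real.exp (-S / 2) := by ring
            linarith
          calc |(∑ i, v i * (ξ₀ i + t * v i - s i * (∑ j, x i j * w j))) ^ 2
                - ∑ i, (v i) ^ 2| * (p w * ((2 * Real.pi) ^ (-(n:ℝ)/2) * Real.exp (-S / 2)))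
              = (|(∑ i, v i * (ξ₀ i + t * v i - s i * (∑ j, x i j * w j))) ^ 2
                - ∑ i, (v i) ^ 2| * Real.exp (-S / 2)) * ((2 * Real.pi) ^ (-(n:ℝ)/2) * p w) := by
                ring
            _ ≤ (((∑ i, v i * (ξ₀ i + t * v i - s i * (∑ j, x i j * w j))) ^ 2
                  + ∑ i, (v i) ^ 2) * Real.exp (-S / 2)) * ((2 * Real.pi) ^ (-(n:ℝ)/2) * p w) :=
                mul_le_mul_of_nonneg_right (mul_le_mul_of_nonneg_right habsd hE0)
                  (mul_nonneg hc2nn (hpnn w))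
            _ ≤ (3 * ∑ i, (v i) ^ 2) * ((2 * Real.pi) ^ (-(n:ℝ)/2) * p w) :=
                mul_le_mul_of_nonneg_right h4 (mul_nonneg hc2nn (hpnn w))
        obtain ⟨hint, hder⟩ := hasDerivAt_integral_of_dominated_loc_of_deriv_le
          (μ := (volume : Measure (Fin d → ℝ)))
          (F := fun (t : ℝ) (w : Fin d → ℝ) =>
            -(∑ i, v i * (ξ₀ i + t * v i - s i * (∑ j, x i j * w j))) * joint w (ξ₀ + t • v))
          (F' := fun (t : ℝ) (w : Fin d → ℝ) =>
            ((∑ i, v i * (ξ₀ i + t * v i - s i * (∑ j, x i j * w j))) ^ 2 - ∑ i, (v i) ^ 2)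
              * joint w (ξ₀ + t • v))
          (bound := fun w => (3 * ∑ i, (v i) ^ 2) * ((2 * Real.pi) ^ (-(n:ℝ)/2) * p w))
          Filter.univ_mem
          (Filter.Eventually.of_forall fun t =>
            (((hcontY t).neg.mul (hcontJ _)).aestronglyMeasurable))
          ((hround1 t₀).1)
          (((((hcontY t₀).pow 2).sub continuous_const).mul (hcontJ _)).aestronglyMeasurable)
          (Filter.Eventually.of_forall fun w t _ => hbnd2 w t)
          ((hIntp.const_mul _).const_mul _)
          (Filter.Eventually.of_forall fun w t _ => hdiff2 w t)
        exact ⟨hint, hder⟩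
      -- variance inequality
      have hvar : ∀ t : ℝ,
          (∫ w : Fin d → ℝ,
            ((∑ i, v i * (ξ₀ i + t * v i - s i * (∑ j, x i j * w j))) ^ 2 - ∑ i, (v i) ^ 2)
              * joint w (ξ₀ + t • v)) * pξ (ξ₀ + t • v)
          - (∫ w : Fin d → ℝ,
              -(∑ i, v i * (ξ₀ i + t * v i - s i * (∑ j, x i j * w j)))
                * joint w (ξ₀ + t • v)) ^ 2 ≤ 0 := by
        intro t
        set ξ : Fin n → ℝ := ξ₀ + t • v with hξdef
        have hξi : ∀ i, ξ₀ i + t * v i = ξ i := fun i => by simp [hξdef]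
        simp only [hξi]
        set C0 : ℝ := ∑ i, v i * ξ i with hC0
        set u : Fin d → ℝ := fun j => ∑ i, v i * s i * x i j with hu2
        have hlin : ∀ w : Fin d → ℝ,
            (∑ i, v i * (ξ i - s i * (∑ j, x i j * w j))) = C0 - ∑ j, u j * w j := by
          intro w
          have e1 : ∀ i, v i * (ξ i - s i * (∑ j, x i j * w j))
              = v i * ξ i - ∑ j, v i * s i * x i j * w j := by
            intro i
            rw [mul_sub]
            congr 1
            calc v i * (s i * (∑ j, x i j * w j))
                = ∑ j, v i * (s i * (x i j * w j)) := by
                  rw [Finset.mul_sum, Finset.mul_sum]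
              _ = ∑ j, v i * s i * x i j * w j :=
                  Finset.sum_congr rfl fun j _ => by ring
          simp_rw [e1]
          rw [Finset.sum_sub_distrib]
          congr 1
          rw [Finset.sum_comm]
          exact Finset.sum_congr rfl fun j _ => (Finset.sum_mul _ _ _).symm
        have hP : pξ ξ = ∫ w : Fin d → ℝ, joint w ξ := hpξ ξ
        have heU : (fun w : Fin d → ℝ => (∑ j, u j * w j) * joint w ξ)
            = fun w => ∑ j, u j * (w j * joint w ξ) := by
          funext w
          rw [Finset.sum_mul]
          exact Finset.sum_congr rfl fun j _ => by ring
        have heUU : (fun w : Fin d → ℝ => (∑ j, u j * w j) ^ 2 * joint w ξ)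
            = fun w => ∑ j, ∑ k, (u j * u k) * (w j * w k * joint w ξ) := by
          funext w
          rw [pow_two, Finset.sum_mul_sum, Finset.sum_mul]
          refine Finset.sum_congr rfl fun j _ => ?_
          rw [Finset.sum_mul]
          exact Finset.sum_congr rfl fun k _ => by ring
        have hIU : Integrable (fun w : Fin d → ℝ => (∑ j, u j * w j) * joint w ξ) := by
          rw [heU]
          exact integrable_finset_sum _ fun j _ => (hIw ξ j).const_mul (u j)
        have hIUU : Integrable (fun w : Fin d → ℝ => (∑ j, u j * w j) ^ 2 * joint w ξ) := by
          rw [heUU]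
          exact integrable_finset_sum _ fun j _ => integrable_finset_sum _ fun k _ =>
            (hIww ξ j k).const_mul _
        have hIUval : ∫ w : Fin d → ℝ, (∑ j, u j * w j) * joint w ξ
            = ∑ j, u j * ∫ w : Fin d → ℝ, w j * joint w ξ := by
          rw [heU, integral_finset_sum _ (fun j _ => (hIw ξ j).const_mul (u j))]
          exact Finset.sum_congr rfl fun j _ => integral_const_mul _ _
        have hIUUval : ∫ w : Fin d → ℝ, (∑ j, u j * w j) ^ 2 * joint w ξ
            = ∑ j, ∑ k, (u j * u k) * ∫ w : Fin d → ℝ, w j * w k * joint w ξ := by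
          rw [heUU, integral_finset_sum _ (fun j _ => integrable_finset_sum _ fun k _ =>
            (hIww ξ j k).const_mul _)]
          refine Finset.sum_congr rfl fun j _ => ?_
          rw [integral_finset_sum _ (fun k _ => (hIww ξ j k).const_mul _)]
          exact Finset.sum_congr rfl fun k _ => integral_const_mul _ _
        have hA1 : ∫ w : Fin d → ℝ,
            -(∑ i, v i * (ξ i - s i * (∑ j, x i j * w j))) * joint w ξ
            = (∑ j, u j * ∫ w : Fin d → ℝ, w j * joint w ξ) - C0 * pξ ξ := by
          have e : (fun w : Fin d → ℝ =>
              -(∑ i, v i * (ξ i - s i * (∑ j, x i j * w j))) * joint w ξ)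
              = fun w => (∑ j, u j * w j) * joint w ξ - C0 * joint w ξ := by
            funext w
            rw [hlin w]
            ring
          rw [e, integral_sub hIU ((hIntJ ξ).const_mul C0), hIUval, integral_const_mul, ← hP]
        have hA2 : ∫ w : Fin d → ℝ,
            ((∑ i, v i * (ξ i - s i * (∑ j, x i j * w j))) ^ 2 - ∑ i, (v i) ^ 2) * joint w ξ
            = ((∑ j, ∑ k, (u j * u k) * ∫ w : Fin d → ℝ, w j * w k * joint w ξ)
                + C0 ^ 2 * pξ ξ)
              - (2 * C0 * (∑ j, u j * ∫ w : Fin d → ℝ, w j * joint w ξ)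
                + (∑ i, (v i) ^ 2) * pξ ξ) := by
          have e : (fun w : Fin d → ℝ =>
              ((∑ i, v i * (ξ i - s i * (∑ j, x i j * w j))) ^ 2 - ∑ i, (v i) ^ 2) * joint w ξ)
              = fun w => ((∑ j, u j * w j) ^ 2 * joint w ξ + C0 ^ 2 * joint w ξ)
                - ((2 * C0) * ((∑ j, u j * w j) * joint w ξ)
                  + (∑ i, (v i) ^ 2) * joint w ξ) := by
            funext w
            rw [hlin w]
            ring
          have hf1 : Integrable (fun w : Fin d → ℝ =>
              (∑ j, u j * w j) ^ 2 * joint w ξ + C0 ^ 2 * joint w ξ) :=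
            hIUU.add ((hIntJ ξ).const_mul _)
          have hf2 : Integrable (fun w : Fin d → ℝ =>
              (2 * C0) * ((∑ j, u j * w j) * joint w ξ) + (∑ i, (v i) ^ 2) * joint w ξ) :=
            (hIU.const_mul _).add ((hIntJ ξ).const_mul _)
          rw [e, integral_sub hf1 hf2,
            integral_add hIUU ((hIntJ ξ).const_mul _),
            integral_add (hIU.const_mul _) ((hIntJ ξ).const_mul _),
            hIUUval, integral_const_mul, integral_const_mul, integral_const_mul, hIUval, ← hP]
        have hchain2 := chain ξ v
        have hcov : (∑ j, ∑ k, u j * CovW ξ j k * u k) * (pξ ξ) ^ 2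
            = (∑ j, ∑ k, (u j * u k) * ∫ w : Fin d → ℝ, w j * w k * joint w ξ) * pξ ξ
              - (∑ j, u j * ∫ w : Fin d → ℝ, w j * joint w ξ) ^ 2 := by
          have hPne : pξ ξ ≠ 0 := (hpξpos ξ).ne'
          have e1 : ∀ j k : Fin d, u j * CovW ξ j k * u k * (pξ ξ) ^ 2
              = (u j * u k) * (∫ w : Fin d → ℝ, w j * w k * joint w ξ) * pξ ξ
                - (u j * ∫ w : Fin d → ℝ, w j * joint w ξ)
                  * (u k * ∫ w : Fin d → ℝ, w k * joint w ξ) := by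
            intro j k
            rw [hCovW ξ j k]
            field_simp
          calc (∑ j, ∑ k, u j * CovW ξ j k * u k) * (pξ ξ) ^ 2
              = ∑ j, ∑ k, u j * CovW ξ j k * u k * (pξ ξ) ^ 2 := by
                rw [Finset.sum_mul]
                exact Finset.sum_congr rfl fun j _ => Finset.sum_mul _ _ _
            _ = ∑ j, ∑ k, ((u j * u k) * (∫ w : Fin d → ℝ, w j * w k * joint w ξ) * pξ ξ
                - (u j * ∫ w : Fin d → ℝ, w j * joint w ξ)
                  * (u k * ∫ w : Fin d → ℝ, w k * joint w ξ)) :=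
                Finset.sum_congr rfl fun j _ => Finset.sum_congr rfl fun k _ => e1 j k
            _ = (∑ j, ∑ k, (u j * u k) * (∫ w : Fin d → ℝ, w j * w k * joint w ξ) * pξ ξ)
                - ∑ j, ∑ k, (u j * ∫ w : Fin d → ℝ, w j * joint w ξ)
                  * (u k * ∫ w : Fin d → ℝ, w k * joint w ξ) := by
                rw [← Finset.sum_sub_distrib]
                exact Finset.sum_congr rfl fun j _ => Finset.sum_sub_distrib _ _
            _ = (∑ j, ∑ k, (u j * u k) * ∫ w : Fin d → ℝ, w j * w k * joint w ξ) * pξ ξ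
                - (∑ j, u j * ∫ w : Fin d → ℝ, w j * joint w ξ) ^ 2 := by
                congr 1
                · rw [Finset.sum_mul]
                  exact Finset.sum_congr rfl fun j _ => (Finset.sum_mul _ _ _).symm
                · rw [pow_two, Finset.sum_mul_sum]
        have hkey2 : (∑ j, ∑ k, (u j * u k) * ∫ w : Fin d → ℝ, w j * w k * joint w ξ) * pξ ξ
            - (∑ j, u j * ∫ w : Fin d → ℝ, w j * joint w ξ) ^ 2
            ≤ (∑ i, (v i) ^ 2) * (pξ ξ) ^ 2 := by
          rw [← hcov]
          exact mul_le_mul_of_nonneg_right hchain2 (sq_nonneg _)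
        rw [hA1, hA2]
        nlinarith [hkey2]
      -- assemble concavity of the 1-D function
      have hf1 : ∀ t : ℝ, HasDerivAt (fun t : ℝ => Real.log (pξ (ξ₀ + t • v)))
          ((∫ w : Fin d → ℝ,
              -(∑ i, v i * (ξ₀ i + t * v i - s i * (∑ j, x i j * w j)))
                * joint w (ξ₀ + t • v)) / pξ (ξ₀ + t • v)) t :=
        fun t => HasDerivAt.log ((hround1 t).2) (hpξpos _).ne'
      have hderiv_f : (deriv fun t : ℝ => Real.log (pξ (ξ₀ + t • v)))
          = fun t : ℝ => (∫ w : Fin d → ℝ,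
              -(∑ i, v i * (ξ₀ i + t * v i - s i * (∑ j, x i j * w j)))
                * joint w (ξ₀ + t • v)) / pξ (ξ₀ + t • v) :=
        funext fun t => (hf1 t).deriv
      have hf2 : ∀ t : ℝ, HasDerivAt (fun t : ℝ => (∫ w : Fin d → ℝ,
              -(∑ i, v i * (ξ₀ i + t * v i - s i * (∑ j, x i j * w j)))
                * joint w (ξ₀ + t • v)) / pξ (ξ₀ + t • v))
          (((∫ w : Fin d → ℝ,
              ((∑ i, v i * (ξ₀ i + t * v i - s i * (∑ j, x i j * w j))) ^ 2 - ∑ i, (v i) ^ 2)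
                * joint w (ξ₀ + t • v)) * pξ (ξ₀ + t • v)
            - (∫ w : Fin d → ℝ,
                -(∑ i, v i * (ξ₀ i + t * v i - s i * (∑ j, x i j * w j)))
                  * joint w (ξ₀ + t • v))
              * (∫ w : Fin d → ℝ,
                -(∑ i, v i * (ξ₀ i + t * v i - s i * (∑ j, x i j * w j)))
                  * joint w (ξ₀ + t • v))) / (pξ (ξ₀ + t • v)) ^ 2) t :=
        fun t => ((hround2 t).2).div ((hround1 t).2) (hpξpos _).ne'
      apply concaveOn_univ_of_deriv2_nonpos
      · exact fun t => (hf1 t).differentiableAt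
      · rw [hderiv_f]
        exact fun t => (hf2 t).differentiableAt
      · intro t
        have hit : deriv^[2] (fun t : ℝ => Real.log (pξ (ξ₀ + t • v))) t
            = deriv (deriv fun t : ℝ => Real.log (pξ (ξ₀ + t • v))) t := by
          simp only [Function.iterate_succ, Function.iterate_zero, Function.comp_apply,
            Function.id_comp]
        rw [hit, hderiv_f, (hf2 t).deriv]
        have hnum := hvar t
        have e : (∫ w : Fin d → ℝ,
              -(∑ i, v i * (ξ₀ i + t * v i - s i * (∑ j, x i j * w j)))
                * joint w (ξ₀ + t • v))
            * (∫ w : Fin d → ℝ,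
              -(∑ i, v i * (ξ₀ i + t * v i - s i * (∑ j, x i j * w j)))
                * joint w (ξ₀ + t • v))
            = (∫ w : Fin d → ℝ,
              -(∑ i, v i * (ξ₀ i + t * v i - s i * (∑ j, x i j * w j)))
                * joint w (ξ₀ + t • v)) ^ 2 := (pow_two _).symm
        rw [e]
        exact div_nonpos_of_nonpos_of_nonneg hnum (sq_nonneg _)
    -- conclude on all of ℝⁿ
    refine ⟨convex_univ, ?_⟩
    intro x₁ _ x₂ _ a b ha hb hab
    have hcl := keyline x₁ (x₂ - x₁)
    have h01 := hcl.2 (Set.mem_univ (0:ℝ)) (Set.mem_univ (1:ℝ)) ha hb hab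
    have e0 : x₁ + (0:ℝ) • (x₂ - x₁) = x₁ := by simp
    have e1 : x₁ + (1:ℝ) • (x₂ - x₁) = x₂ := by simp
    have eb : x₁ + (a • (0:ℝ) + b • (1:ℝ)) • (x₂ - x₁) = a • x₁ + b • x₂ := by
      have hA : a = 1 - b := by linarith
      rw [show a • (0:ℝ) + b • (1:ℝ) = b by simp [smul_eq_mul], hA]
      module
    simp only [e0, e1, eb] at h01
    simpa only [smul_eq_mul] using h01
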